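/- Let R be a commutative ring with q ∈ R nilpotent and A(R) = R[[x₁,x₂]]/(x₁x₂ − q). If λ ∈ R^* and u ∈ A(R)^* satisfy λ·x₁ = x₁·u and x₂ = x₂·u^{-1} in A(R), then λ = 1 and u = 1. -/

import Mathlib

/-- `A(R) = R[[x₁,x₂]]/(x₁x₂ - q)`. -/
noncomputable abbrev NodeAlg (R : Type*) [CommRing R] (q : R) :=
  MvPowerSeries (Fin 2) R ⧸
    Ideal.span {MvPowerSeries.X (0 : Fin 2) * MvPowerSeries.X 1 - (MvPowerSeries.C q : MvPowerSeries (Fin 2) R)}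

/-- The projection `R[[x₁,x₂]] → A(R)`. -/
noncomputable abbrev nodeMk (R : Type*) [CommRing R] (q : R) :
    MvPowerSeries (Fin 2) R →+* NodeAlg R q :=
  Ideal.Quotient.mk _

/-!
Write `x = x₁`, `y = x₂` and `P = xy - q`. Modulo `P` every series is congruent to a normal
form `f(x) + g(y)`, whose coefficients are the linear functionals
`normalCoeff₁ a F = ∑ₖ qᵏ [xᵃ⁺ᵏ yᵏ] F` and `normalCoeff₂` (the same after swapping `x` and `y`);
the sums are finite because `q` is nilpotent. These functionals vanish on multiples of `P` by
telescoping, and a series on which all of them vanish is `P` times an explicit cofactor.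
Multiplication by `x` shifts `normalCoeff₁`, so `λx ≡ xu` says that `u` has the `x`-part of the
constant `λ`; likewise `yu ≡ y` says that `u` has the `y`-part of `1`. The constant terms of the
two parts agree, so `λ = 1`, and then `u` and `1` have the same normal form.
-/

namespace NodeAlg

open MvPowerSeries Finset

variable {R : Type*} [CommRing R]

noncomputable def bidegree (a b : ℕ) : Fin 2 →₀ ℕ := Finsupp.single 0 a + Finsupp.single 1 b

@[simp] lemma bidegree_apply_zero (a b : ℕ) : bidegree a b 0 = a := by simp [bidegree]

@[simp] lemma bidegree_apply_one (a b : ℕ) : bidegree a b 1 = b := by simp [bidegree]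

lemma bidegree_eta (m : Fin 2 →₀ ℕ) : bidegree (m 0) (m 1) = m := by
  ext i; fin_cases i <;> simp

lemma bidegree_inj {a b c d : ℕ} : bidegree a b = bidegree c d ↔ a = c ∧ b = d :=
  ⟨fun h => ⟨by simpa using congr($h 0), by simpa using congr($h 1)⟩,
    by rintro ⟨rfl, rfl⟩; rfl⟩

lemma bidegree_zero_zero : bidegree 0 0 = 0 := by simp [bidegree]

lemma bidegree_add (a b c d : ℕ) : bidegree a b + bidegree c d = bidegree (a + c) (b + d) := by
  ext i; fin_cases i <;> simp

lemma ext_bidegree {F G : MvPowerSeries (Fin 2) R}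
    (h : ∀ a b, coeff (bidegree a b) F = coeff (bidegree a b) G) : F = G :=
  MvPowerSeries.ext fun m => by simpa only [bidegree_eta] using h (m 0) (m 1)

lemma coeff_bidegree_C (a b : ℕ) (r : R) :
    coeff (bidegree a b) (C r : MvPowerSeries (Fin 2) R) = if a = 0 ∧ b = 0 then r else 0 := by
  simp [coeff_C, ← bidegree_zero_zero, bidegree_inj]

lemma coeff_bidegree_succ_left_X_zero_mul (a b : ℕ) (F : MvPowerSeries (Fin 2) R) :
    coeff (bidegree (a + 1) b) (X 0 * F) = coeff (bidegree a b) F := by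
  rw [X_def, show bidegree (a + 1) b = bidegree 1 0 + bidegree a b by
    rw [bidegree_add, add_comm 1, zero_add]]
  simpa [bidegree] using coeff_add_monomial_mul _ _ F (1 : R)

lemma coeff_bidegree_succ_right_X_one_mul (a b : ℕ) (F : MvPowerSeries (Fin 2) R) :
    coeff (bidegree a (b + 1)) (X 1 * F) = coeff (bidegree a b) F := by
  rw [X_def, show bidegree a (b + 1) = bidegree 0 1 + bidegree a b by
    rw [bidegree_add, add_comm 1, zero_add]]
  simpa [bidegree] using coeff_add_monomial_mul _ _ F (1 : R)

lemma coeff_bidegree_zero_right_X_one_mul (a : ℕ) (F : MvPowerSeries (Fin 2) R) :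
    coeff (bidegree a 0) (X 1 * F) = 0 := by
  rw [X_def, coeff_monomial_mul, if_neg]
  simp [Finsupp.single_le_iff]

noncomputable abbrev swapVars : MvPowerSeries (Fin 2) R →ₐ[R] MvPowerSeries (Fin 2) R :=
  rename (Equiv.swap (0 : Fin 2) 1)

lemma coeff_bidegree_swapVars (a b : ℕ) (F : MvPowerSeries (Fin 2) R) :
    coeff (bidegree a b) (swapVars F) = coeff (bidegree b a) F := by
  have h : (bidegree b a).embDomain (Equiv.swap (0 : Fin 2) 1).toEmbedding = bidegree a b := by
    ext i; fin_cases i <;> simp [Finsupp.embDomain_eq_mapDomain]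
  rw [← h]
  exact coeff_embDomain_rename (Equiv.swap (0 : Fin 2) 1).toEmbedding F (bidegree b a)

lemma swapVars_X_one_mul (F : MvPowerSeries (Fin 2) R) :
    swapVars (X 1 * F) = X 0 * swapVars F := by
  simp

noncomputable def nodeRel (q : R) : MvPowerSeries (Fin 2) R := X 0 * X 1 - C q

lemma swapVars_nodeRel (q : R) : swapVars (nodeRel q) = nodeRel q := by
  simp [nodeRel, mul_comm]

variable {q : R}

lemma coeff_bidegree_succ_succ_nodeRel_mul (a b : ℕ) (K : MvPowerSeries (Fin 2) R) :
    coeff (bidegree (a + 1) (b + 1)) (nodeRel q * K) =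
      coeff (bidegree a b) K - q * coeff (bidegree (a + 1) (b + 1)) K := by
  rw [nodeRel, sub_mul, map_sub, mul_assoc, coeff_bidegree_succ_left_X_zero_mul,
    coeff_bidegree_succ_right_X_one_mul, coeff_C_mul]

lemma coeff_bidegree_zero_right_nodeRel_mul (a : ℕ) (K : MvPowerSeries (Fin 2) R) :
    coeff (bidegree a 0) (nodeRel q * K) = -(q * coeff (bidegree a 0) K) := by
  rw [nodeRel, sub_mul, map_sub, mul_assoc, mul_left_comm, coeff_bidegree_zero_right_X_one_mul,
    coeff_C_mul, zero_sub]

-- Meaningful only when `q ^ (N + 1) = 0`; the truncation then loses nothing.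
variable (q) in
noncomputable def normalCoeff₁ (N a : ℕ) : MvPowerSeries (Fin 2) R →ₗ[R] R :=
  ∑ b ∈ range (N + 1), q ^ b • coeff (bidegree (a + b) b)

lemma normalCoeff₁_apply (N a : ℕ) (F : MvPowerSeries (Fin 2) R) :
    normalCoeff₁ q N a F = ∑ b ∈ range (N + 1), q ^ b * coeff (bidegree (a + b) b) F := by
  simp [normalCoeff₁, LinearMap.sum_apply]

lemma sum_pow_mul_coeff_nodeRel_mul (N a : ℕ) (K : MvPowerSeries (Fin 2) R) :
    ∑ b ∈ range (N + 1), q ^ b * coeff (bidegree (a + b) b) (nodeRel q * K) =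
      -(q ^ (N + 1) * coeff (bidegree (a + N) N) K) := by
  induction N with
  | zero => simp [coeff_bidegree_zero_right_nodeRel_mul]
  | succ N ih =>
    rw [sum_range_succ, ih, ← add_assoc, coeff_bidegree_succ_succ_nodeRel_mul]
    ring

lemma normalCoeff₁_eq_of_sub_mem {N : ℕ} (hN : q ^ (N + 1) = 0) (a : ℕ)
    {F G : MvPowerSeries (Fin 2) R} (h : F - G ∈ Ideal.span {nodeRel q}) :
    normalCoeff₁ q N a F = normalCoeff₁ q N a G := by
  obtain ⟨K, hK⟩ := Ideal.mem_span_singleton.mp h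
  rw [← sub_eq_zero, ← map_sub, hK, normalCoeff₁_apply, sum_pow_mul_coeff_nodeRel_mul, hN,
    zero_mul, neg_zero]

lemma normalCoeff₁_succ_X_zero_mul (N a : ℕ) (F : MvPowerSeries (Fin 2) R) :
    normalCoeff₁ q N (a + 1) (X 0 * F) = normalCoeff₁ q N a F := by
  simp only [normalCoeff₁_apply, add_right_comm a 1, coeff_bidegree_succ_left_X_zero_mul]

lemma normalCoeff₁_C (N a : ℕ) (r : R) :
    normalCoeff₁ q N a (C r) = if a = 0 then r else 0 := by
  rw [normalCoeff₁_apply, sum_eq_single 0 (fun b _ hb => by simp [coeff_bidegree_C, hb])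
    (by simp)]
  simp [coeff_bidegree_C]

variable (q) in
noncomputable def normalCoeff₂ (N b : ℕ) : MvPowerSeries (Fin 2) R →ₗ[R] R :=
  normalCoeff₁ q N b ∘ₗ swapVars.toLinearMap

lemma normalCoeff₂_apply (N b : ℕ) (F : MvPowerSeries (Fin 2) R) :
    normalCoeff₂ q N b F = normalCoeff₁ q N b (swapVars F) := rfl

lemma swapVars_mem_span_nodeRel {F : MvPowerSeries (Fin 2) R}
    (h : F ∈ Ideal.span {nodeRel q}) : swapVars F ∈ Ideal.span {nodeRel q} := by
  obtain ⟨K, rfl⟩ := Ideal.mem_span_singleton.mp h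
  rw [map_mul, swapVars_nodeRel]
  exact Ideal.mul_mem_right _ _ (Ideal.mem_span_singleton_self _)

lemma normalCoeff₂_eq_of_sub_mem {N : ℕ} (hN : q ^ (N + 1) = 0) (b : ℕ)
    {F G : MvPowerSeries (Fin 2) R} (h : F - G ∈ Ideal.span {nodeRel q}) :
    normalCoeff₂ q N b F = normalCoeff₂ q N b G :=
  normalCoeff₁_eq_of_sub_mem hN b (map_sub swapVars F G ▸ swapVars_mem_span_nodeRel h)

lemma normalCoeff₂_succ_X_one_mul (N b : ℕ) (F : MvPowerSeries (Fin 2) R) :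
    normalCoeff₂ q N (b + 1) (X 1 * F) = normalCoeff₂ q N b F := by
  rw [normalCoeff₂_apply, swapVars_X_one_mul, normalCoeff₁_succ_X_zero_mul, normalCoeff₂_apply]

lemma normalCoeff₂_C (N b : ℕ) (r : R) :
    normalCoeff₂ q N b (C r) = if b = 0 then r else 0 := by
  rw [normalCoeff₂_apply, rename_C, normalCoeff₁_C]

lemma normalCoeff₂_zero (N : ℕ) (F : MvPowerSeries (Fin 2) R) :
    normalCoeff₂ q N 0 F = normalCoeff₁ q N 0 F := by
  simp only [normalCoeff₂_apply, normalCoeff₁_apply, zero_add, coeff_bidegree_swapVars]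

-- `G a b = F (a+1) (b+1) + q G (a+1) (b+1)` unrolled until `q ^ (N + 1) = 0`, so that `P G`
-- agrees with `F` off the axes.
variable (q) in
noncomputable def nodeRelCofactor (N : ℕ) (F : MvPowerSeries (Fin 2) R) :
    MvPowerSeries (Fin 2) R :=
  fun m => ∑ j ∈ range (N + 1), q ^ j * coeff (m + bidegree (j + 1) (j + 1)) F

lemma coeff_bidegree_nodeRelCofactor (N a b : ℕ) (F : MvPowerSeries (Fin 2) R) :
    coeff (bidegree a b) (nodeRelCofactor q N F) =
      ∑ j ∈ range (N + 1), q ^ j * coeff (bidegree (a + (j + 1)) (b + (j + 1))) F := by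
  simp only [coeff_apply, nodeRelCofactor, bidegree_add]

lemma swapVars_nodeRelCofactor (N : ℕ) (F : MvPowerSeries (Fin 2) R) :
    swapVars (nodeRelCofactor q N F) = nodeRelCofactor q N (swapVars F) :=
  ext_bidegree fun a b => by
    simp only [coeff_bidegree_swapVars, coeff_bidegree_nodeRelCofactor]

lemma coeff_bidegree_succ_succ_nodeRel_mul_cofactor {N : ℕ} (hN : q ^ (N + 1) = 0) (a b : ℕ)
    (F : MvPowerSeries (Fin 2) R) :
    coeff (bidegree (a + 1) (b + 1)) (nodeRel q * nodeRelCofactor q N F) =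
      coeff (bidegree (a + 1) (b + 1)) F := by
  let f j := q ^ j * coeff (bidegree (a + (j + 1)) (b + (j + 1))) F
  calc _ = ∑ j ∈ range (N + 1), (f j - f (j + 1)) := by
        rw [coeff_bidegree_succ_succ_nodeRel_mul, coeff_bidegree_nodeRelCofactor,
          coeff_bidegree_nodeRelCofactor, mul_sum, ← sum_sub_distrib]
        refine sum_congr rfl fun j _ => ?_
        rw [show a + 1 + (j + 1) = a + (j + 1 + 1) by omega,
          show b + 1 + (j + 1) = b + (j + 1 + 1) by omega]
        ring
    _ = _ := by rw [sum_range_sub']; simp [f, hN]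

lemma coeff_bidegree_zero_right_nodeRel_mul_cofactor {N : ℕ} (hN : q ^ (N + 1) = 0) (a : ℕ)
    (F : MvPowerSeries (Fin 2) R) :
    coeff (bidegree a 0) (nodeRel q * nodeRelCofactor q N F) =
      coeff (bidegree a 0) F - normalCoeff₁ q N a F := by
  rw [coeff_bidegree_zero_right_nodeRel_mul, coeff_bidegree_nodeRelCofactor, mul_sum,
    sum_range_succ, ← mul_assoc, ← pow_succ', hN, normalCoeff₁_apply, sum_range_succ']
  simp only [zero_mul, add_zero, zero_add, pow_zero, one_mul, ← mul_assoc, ← pow_succ']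
  ring

lemma mem_span_nodeRel_of_normalCoeff_eq_zero {N : ℕ} (hN : q ^ (N + 1) = 0)
    {F : MvPowerSeries (Fin 2) R} (h₁ : ∀ a, normalCoeff₁ q N a F = 0)
    (h₂ : ∀ b, normalCoeff₂ q N b F = 0) : F ∈ Ideal.span {nodeRel q} := by
  refine Ideal.mem_span_singleton.mpr ⟨nodeRelCofactor q N F, ext_bidegree fun a b => ?_⟩
  rcases b with _ | b
  · rw [coeff_bidegree_zero_right_nodeRel_mul_cofactor hN, h₁, sub_zero]
  rcases a with _ | a
  · rw [← coeff_bidegree_swapVars, ← coeff_bidegree_swapVars (F := nodeRel q * _), map_mul,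
      swapVars_nodeRel, swapVars_nodeRelCofactor,
      coeff_bidegree_zero_right_nodeRel_mul_cofactor hN, ← normalCoeff₂_apply, h₂, sub_zero]
  · rw [coeff_bidegree_succ_succ_nodeRel_mul_cofactor hN]

lemma sub_mem_span_nodeRel_of_normalCoeff_eq {N : ℕ} (hN : q ^ (N + 1) = 0)
    {F G : MvPowerSeries (Fin 2) R} (h₁ : ∀ a, normalCoeff₁ q N a F = normalCoeff₁ q N a G)
    (h₂ : ∀ b, normalCoeff₂ q N b F = normalCoeff₂ q N b G) : F - G ∈ Ideal.span {nodeRel q} :=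
  mem_span_nodeRel_of_normalCoeff_eq_zero hN (by simp [h₁]) (by simp [h₂])

variable (q) in
lemma nodeMk_eq_nodeMk_iff {F G : MvPowerSeries (Fin 2) R} :
    nodeMk R q F = nodeMk R q G ↔ F - G ∈ Ideal.span {nodeRel q} :=
  Ideal.Quotient.eq

variable (q) in
lemma nodeMk_C (r : R) : nodeMk R q (C r) = algebraMap R (NodeAlg R q) r := by
  rw [← Ideal.Quotient.mk_algebraMap, MvPowerSeries.algebraMap_apply, Algebra.algebraMap_self,
    RingHom.id_apply]

end NodeAlg

/- If `λ ∈ R^*` and a unit `u ∈ A(R)^*` satisfy `λ·x₁ = x₁·u` and `x₂ = x₂·u⁻¹`,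
then `λ = 1` and `u = 1`. -/
theorem node_scaling_trivial (R : Type*) [CommRing R] (q : R) (hq : IsNilpotent q)
    (lam : Rˣ) (u : (NodeAlg R q)ˣ)
    (h₁ : algebraMap R (NodeAlg R q) (lam : R) * nodeMk R q (MvPowerSeries.X (0 : Fin 2)) =
      nodeMk R q (MvPowerSeries.X (0 : Fin 2)) * u)
    (h₂ : nodeMk R q (MvPowerSeries.X (1 : Fin 2)) =
      nodeMk R q (MvPowerSeries.X (1 : Fin 2)) * ↑u⁻¹) :
    lam = 1 ∧ (u : NodeAlg R q) = 1 := by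
  open NodeAlg MvPowerSeries in
  obtain ⟨N, hN⟩ : ∃ N, q ^ (N + 1) = 0 := hq.imp fun n hn => by rw [pow_succ, hn, zero_mul]
  obtain ⟨F, hF⟩ := Ideal.Quotient.mk_surjective (u : NodeAlg R q)
  have hx : X 0 * F - X 0 * C (lam : R) ∈ Ideal.span {nodeRel q} := by
    rw [← nodeMk_eq_nodeMk_iff, map_mul, map_mul, hF, nodeMk_C, ← h₁, mul_comm]
  have hy : X 1 * F - X 1 * C 1 ∈ Ideal.span {nodeRel q} := by
    rw [← nodeMk_eq_nodeMk_iff, map_one, mul_one, map_mul, hF]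
    exact (Units.eq_mul_inv_iff_mul_eq u).mp h₂
  have hS a : normalCoeff₁ q N a F = normalCoeff₁ q N a (C (lam : R)) := by
    simpa only [normalCoeff₁_succ_X_zero_mul] using normalCoeff₁_eq_of_sub_mem hN (a + 1) hx
  have hT b : normalCoeff₂ q N b F = normalCoeff₂ q N b (C 1) := by
    simpa only [normalCoeff₂_succ_X_one_mul] using normalCoeff₂_eq_of_sub_mem hN (b + 1) hy
  have hlam : (lam : R) = 1 := by
    have h := hT 0
    rw [normalCoeff₂_zero, hS 0, normalCoeff₁_C, normalCoeff₂_C] at h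
    simpa using h
  refine ⟨Units.ext hlam, ?_⟩
  rw [hlam] at hS
  rw [← hF, ← map_one (nodeMk R q), ← map_one C, nodeMk_eq_nodeMk_iff]
  exact sub_mem_span_nodeRel_of_normalCoeff_eq hN hS hT
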